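/- arXiv:2301.09139 — 2 statements merged into one kernel-verified Lean document; each statement's English description precedes it below -/
import Mathlib

section
/- Let R be a prime ring of characteristic different from 2 and let (D₁, d₁) and (D₂, d₂) be generalized derivations on R. Then the pair (D₁² + D₁∘D₂, d₁² + d₁∘d₂) is a generalized derivation on R if and only if one of the following holds: (i) d₁ ≠ 0, d₂ = −d₁ and D₂ = −D₁; (ii) d₁ = 0, d₂ ≠ 0 and D₁ = 0; (iii) d₁ = 0 and d₂ = 0 (that is, D₁ and D₂ are left centralizers). -/
/-!
Writing `E = D₁ + D₂` and `e = d₁ + d₂`, the pair in question is `(D₁ ∘ E, d₁ ∘ e)`, and the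
Leibniz rule for a composite of generalized derivations shows that it is a generalized derivation
exactly when the cross terms vanish: `E x * d₁ y + D₁ x * e y = 0` and
`e x * d₁ y + d₁ x * e y = 0`. In a prime ring of characteristic not 2, the second identity
forces `e = 0` as soon as `d₁ ≠ 0` (a classical argument of Posner's type), and then the first
reads `E x * d₁ y = 0`, forcing `E = 0`. If `d₁ = 0`, the first identity reads
`D₁ x * d₂ y = 0`, so `D₁ = 0` unless `d₂ = 0`.
-/

/-- An additive map `d : R → R` with `d (x*y) = d x * y + x * d y` is a derivation. -/
def IsDerivation {R : Type*} [Ring R] (d : R → R) : Prop :=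
  (∀ x y, d (x + y) = d x + d y) ∧ (∀ x y, d (x * y) = d x * y + x * d y)

/-- A generalized derivation `(D, d)`: `D` additive, `d` a derivation, and
`D (x*y) = D x * y + x * d y`. -/
def IsGenDerivation {R : Type*} [Ring R] (D d : R → R) : Prop :=
  (∀ x y, D (x + y) = D x + D y) ∧ IsDerivation d ∧ (∀ x y, D (x * y) = D x * y + x * d y)

section

variable {R : Type*} [Ring R]

theorem IsDerivation.isGenDerivation {d : R → R} (hd : IsDerivation d) :
    IsGenDerivation d d :=
  ⟨hd.1, hd, hd.2⟩

namespace IsGenDerivation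

variable {D d E e : R → R}

theorem add (hD : IsGenDerivation D d) (hE : IsGenDerivation E e) :
    IsGenDerivation (fun x => D x + E x) (fun x => d x + e x) := by
  obtain ⟨hDadd, ⟨hdadd, hdmul⟩, hDmul⟩ := hD
  obtain ⟨hEadd, ⟨headd, hemul⟩, hEmul⟩ := hE
  refine ⟨fun x y => ?_, ⟨fun x y => ?_, fun x y => ?_⟩, fun x y => ?_⟩
  · simp only [hDadd, hEadd]; abel
  · simp only [hdadd, headd]; abel
  · simp only [hdmul, hemul]; noncomm_ring
  · simp only [hDmul, hEmul]; noncomm_ring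

theorem comp_mul (hD : IsGenDerivation D d) (hE : IsGenDerivation E e) (x y : R) :
    D (E (x * y)) = D (E x) * y + x * d (e y) + (E x * d y + D x * e y) := by
  rw [hE.2.2, hD.1, hD.2.2, hD.2.2]
  abel

theorem comp_iff (hD : IsGenDerivation D d) (hE : IsGenDerivation E e) :
    IsGenDerivation (fun x => D (E x)) (fun x => d (e x)) ↔
      (∀ x y, E x * d y + D x * e y = 0) ∧ (∀ x y, e x * d y + d x * e y = 0) := by
  have hDE_add : ∀ x y, D (E (x + y)) = D (E x) + D (E y) := fun x y => by rw [hE.1, hD.1]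
  have hde_add : ∀ x y, d (e (x + y)) = d (e x) + d (e y) := fun x y => by
    rw [hE.2.1.1, hD.2.1.1]
  simp only [IsGenDerivation, IsDerivation, hDE_add, hde_add, comp_mul hD hE,
    comp_mul hD.2.1.isGenDerivation hE.2.1.isGenDerivation, add_eq_left, implies_true,
    true_and]
  exact and_comm

end IsGenDerivation

theorem eq_zero_of_forall_eq_zero_or_eq_zero {f g : R → R}
    (hf : ∀ x y, f (x + y) = f x + f y) (hg : ∀ x y, g (x + y) = g x + g y) (hf0 : f ≠ 0)
    (h : ∀ x, f x = 0 ∨ g x = 0) : g = 0 := by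
  obtain ⟨a, ha⟩ := Function.ne_iff.mp hf0
  have hga : g a = 0 := (h a).resolve_left ha
  funext x
  by_cases hx : f x = 0
  · have hgxa : g (x + a) = 0 := (h (x + a)).resolve_left (by rwa [hf, hx, zero_add])
    rwa [hg, hga, add_zero] at hgxa
  · exact (h x).resolve_left hx

theorem eq_zero_of_forall_mul_derivation_eq_zero
    (hprime : ∀ x y : R, (∀ r : R, x * r * y = 0) → x = 0 ∨ y = 0)
    {d : R → R} (hd : IsDerivation d) (hd0 : d ≠ 0)
    {a : R} (h : ∀ y, a * d y = 0) : a = 0 := by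
  obtain ⟨y, hy⟩ := Function.ne_iff.mp hd0
  refine (hprime a (d y) fun r => ?_).resolve_right hy
  have hry := h (r * y)
  rwa [hd.2, mul_add, ← mul_assoc, h r, zero_mul, zero_add, ← mul_assoc] at hry

theorem derivation_eq_zero_of_cross_eq_zero
    (hprime : ∀ x y : R, (∀ r : R, x * r * y = 0) → x = 0 ∨ y = 0)
    (hchar : ∀ x : R, 2 * x = 0 → x = 0)
    {δ γ : R → R} (hδ : IsDerivation δ) (hδ0 : δ ≠ 0) (hγ : IsDerivation γ)
    (hcross : ∀ x y, γ x * δ y + δ x * γ y = 0) : γ = 0 := by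
  have hcross_mul : ∀ x z y, γ x * z * δ y = -(δ x * z * γ y) := fun x z y => by
    have h := hcross (x * z) y
    have hz : x * (γ z * δ y + δ z * γ y) = 0 := by rw [hcross, mul_zero]
    rw [hγ.2, hδ.2] at h
    simp only [add_mul, mul_add, mul_assoc] at h hz ⊢
    exact eq_neg_of_add_eq_zero_left (by linear_combination (norm := abel1) h - hz)
  -- Substituting `z * δ y * w` for `z` makes both terms equal to `δ x * z * (δ y * w * γ y)`.
  have hsandwich : ∀ x z y w, δ x * z * (δ y * w * γ y) = 0 := fun x z y w => by
    have h := hcross_mul x (z * δ y * w) y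
    have h₁ : γ x * (z * δ y * w) * δ y = (γ x * z * δ y) * w * δ y := by noncomm_ring
    have h₂ : δ x * (z * δ y * w) * γ y = δ x * z * (δ y * w * γ y) := by noncomm_ring
    rw [h₁, h₂, hcross_mul, neg_mul, neg_mul, mul_assoc _ (γ y), mul_assoc, hcross_mul,
      mul_neg, neg_neg, eq_neg_iff_add_eq_zero, ← two_mul] at h
    exact hchar _ (by simpa only [mul_assoc] using h)
  obtain ⟨x₀, hx₀⟩ := Function.ne_iff.mp hδ0
  refine eq_zero_of_forall_eq_zero_or_eq_zero hδ.1 hγ.1 hδ0 fun y => hprime _ _ fun w => ?_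
  exact (hprime (δ x₀) _ fun z => hsandwich x₀ z y w).resolve_left hx₀

end

theorem stmt4 {R : Type*} [Ring R]
    (hprime : ∀ x y : R, (∀ r : R, x * r * y = 0) → x = 0 ∨ y = 0)
    (hchar : ∀ x : R, 2 * x = 0 → x = 0)
    (D₁ d₁ D₂ d₂ : R → R)
    (h₁ : IsGenDerivation D₁ d₁) (h₂ : IsGenDerivation D₂ d₂) :
    IsGenDerivation (fun x => D₁ (D₁ x) + D₁ (D₂ x)) (fun x => d₁ (d₁ x) + d₁ (d₂ x)) ↔
      ((d₁ ≠ 0 ∧ d₂ = -d₁ ∧ D₂ = -D₁) ∨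
       (d₁ = 0 ∧ d₂ ≠ 0 ∧ D₁ = 0) ∨
       (d₁ = 0 ∧ d₂ = 0)) := by
  have hsum := h₁.add h₂
  have hF : (fun x => D₁ (D₁ x) + D₁ (D₂ x)) = fun x => D₁ (D₁ x + D₂ x) :=
    funext fun x => (h₁.1 _ _).symm
  have hf : (fun x => d₁ (d₁ x) + d₁ (d₂ x)) = fun x => d₁ (d₁ x + d₂ x) :=
    funext fun x => (h₁.2.1.1 _ _).symm
  rw [hF, hf, h₁.comp_iff hsum]
  constructor
  · rintro ⟨hcross, hcross'⟩
    by_cases hd₁ : d₁ = 0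
    · by_cases hd₂ : d₂ = 0
      · exact Or.inr (Or.inr ⟨hd₁, hd₂⟩)
      refine Or.inr (Or.inl ⟨hd₁, hd₂, funext fun x => ?_⟩)
      refine eq_zero_of_forall_mul_derivation_eq_zero hprime h₂.2.1 hd₂ fun y => ?_
      simpa [hd₁] using hcross x y
    have he := derivation_eq_zero_of_cross_eq_zero hprime hchar h₁.2.1 hd₁ hsum.2.1 hcross'
    have hE : ∀ x, D₁ x + D₂ x = 0 := fun x =>
      eq_zero_of_forall_mul_derivation_eq_zero hprime h₁.2.1 hd₁ fun y => by
        simpa [congrFun he y] using hcross x y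
    refine Or.inl ⟨hd₁, funext fun y => ?_, funext fun x => ?_⟩
    · exact eq_neg_of_add_eq_zero_right (congrFun he y)
    · exact eq_neg_of_add_eq_zero_right (hE x)
  · rintro (⟨-, rfl, rfl⟩ | ⟨rfl, -, rfl⟩ | ⟨rfl, rfl⟩) <;> simp
end

section
/- Let R be a prime ring of characteristic different from 2 and let (D₁, d₁) and (D₂, d₂) be generalized derivations on R such that the pair (D₁² + D₁∘D₂, d₁² + d₁∘d₂) is a generalized derivation on R. If D₂ is a left centralizer on R (equivalently, d₂ = 0), then D₁ is a left centralizer on R (equivalently, d₁ = 0). -/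
section

variable {R : Type*} [Ring R]

theorem eq_zero_of_forall_mul_eq_zero_of_prime
    (hprime : ∀ x y : R, (∀ r : R, x * r * y = 0) → x = 0 ∨ y = 0)
    {a : R} (h : ∀ x, x * a = 0) : a = 0 :=
  (hprime a a fun r => h (a * r)).elim id id

theorem IsDerivation.map_zero {d : R → R} (hd : IsDerivation d) : d 0 = 0 := by
  simpa using hd.1 0 0

theorem IsDerivation.eq_zero_or_forall_eq_zero_of_mul_eq_zero
    (hprime : ∀ x y : R, (∀ r : R, x * r * y = 0) → x = 0 ∨ y = 0)
    {d : R → R} (hd : IsDerivation d) {a : R} (h : ∀ y, a * d y = 0) :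
    a = 0 ∨ ∀ y, d y = 0 := by
  have h' : ∀ r y, a * r * d y = 0 := fun r y => by
    simpa only [hd.2, mul_add, ← mul_assoc, h, zero_mul, zero_add] using h (r * y)
  exact forall_or_left.mp fun y => hprime a (d y) fun r => h' r y

theorem IsGenDerivation.forall_eq_zero_of_map_mul
    (hprime : ∀ x y : R, (∀ r : R, x * r * y = 0) → x = 0 ∨ y = 0)
    {D d : R → R} (hD : IsGenDerivation D d) (hLC : ∀ x y, D (x * y) = D x * y) (y : R) :
    d y = 0 :=
  eq_zero_of_forall_mul_eq_zero_of_prime hprime fun x => by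
    simpa [hLC] using hD.2.2 x y

theorem map_mul_of_two_mul_add_eq_zero (hchar : ∀ x : R, 2 * x = 0 → x = 0)
    {D T : R → R} (hT : ∀ x y, T (x * y) = T x * y) (h : ∀ x, 2 * D x + T x = 0) (x y : R) :
    D (x * y) = D x * y := by
  have hD : ∀ x, 2 * D x = -T x := fun x => eq_neg_of_add_eq_zero_left (h x)
  refine sub_eq_zero.mp (hchar _ ?_)
  rw [mul_sub, hD, ← mul_assoc, hD, hT, neg_mul, sub_self]

theorem IsGenDerivation.two_mul_add_mul_eq_zero_of_sq_add_comp {D₁ d₁ D₂ d₂ : R → R}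
    (h₁ : IsGenDerivation D₁ d₁) (hLC : ∀ x y, D₂ (x * y) = D₂ x * y) (hd₂ : ∀ y, d₂ y = 0)
    (h : IsGenDerivation (fun x => D₁ (D₁ x) + D₁ (D₂ x)) (fun x => d₁ (d₁ x) + d₁ (d₂ x)))
    (x y : R) : (2 * D₁ x + D₂ x) * d₁ y = 0 := by
  have hxy := h.2.2 x y
  simp only [hLC, h₁.1, h₁.2.2, hd₂, h₁.2.1.map_zero] at hxy
  rw [← sub_eq_zero_of_eq hxy]
  noncomm_ring

end

theorem stmt14 {R : Type*} [Ring R]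
    (hprime : ∀ x y : R, (∀ r : R, x * r * y = 0) → x = 0 ∨ y = 0)
    (hchar : ∀ x : R, 2 * x = 0 → x = 0)
    (D₁ d₁ D₂ d₂ : R → R)
    (h₁ : IsGenDerivation D₁ d₁) (h₂ : IsGenDerivation D₂ d₂)
    (h : IsGenDerivation (fun x => D₁ (D₁ x) + D₁ (D₂ x)) (fun x => d₁ (d₁ x) + d₁ (d₂ x)))
    (hLC : ∀ x y : R, D₂ (x * y) = D₂ x * y) :
    ∀ x y : R, D₁ (x * y) = D₁ x * y := by
  have hd₂ := h₂.forall_eq_zero_of_map_mul hprime hLC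
  have key := h₁.two_mul_add_mul_eq_zero_of_sq_add_comp hLC hd₂ h
  rcases forall_or_right.mp fun x => h₁.2.1.eq_zero_or_forall_eq_zero_of_mul_eq_zero hprime (key x)
    with hT | hd₁
  · exact map_mul_of_two_mul_add_eq_zero hchar hLC hT
  · intro x y
    rw [h₁.2.2, hd₁, mul_zero, add_zero]
end
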